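/- arXiv:1102.4946 — 3 statements merged into one kernel-verified Lean document; each statement's English description precedes it below -/
import Mathlib

section
/- For a positive integer n ≥ 1, the greatest common divisor of the binomial coefficients C(n+1,1), C(n+1,2), ..., C(n+1,n) equals 1 if and only if n+1 is not a power of a prime. -/
open Nat Finset

lemma key_not_dvd_choose (p a b : ℕ) (hp : p.Prime) (ha : 1 ≤ a) (hb : 2 ≤ b)
    (hpb : ¬ p ∣ b) : ¬ p ∣ (p ^ a * b).choose (p ^ a) := by
  haveI : Fact p.Prime := ⟨hp⟩
  have hppos : 0 < p := hp.pos
  have hk : p ^ a ≤ p ^ a * b := Nat.le_mul_of_pos_right _ (by omega)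
  have hchoosepos : 0 < (p ^ a * b).choose (p ^ a) := Nat.choose_pos hk
  rw [dvd_iff_padicValNat_ne_zero hchoosepos.ne', not_not]
  rw [padicValNat_choose hk (lt_succ_self _)]
  rw [Finset.card_eq_zero, Finset.filter_eq_empty_iff]
  intro i hi
  simp only [Finset.mem_Ico] at hi
  have hsub : p ^ a * b - p ^ a = p ^ a * (b - 1) := by
    rw [Nat.mul_sub, mul_one]
  rw [hsub]
  by_cases hia : i ≤ a
  · have h1 : p ^ i ∣ p ^ a := pow_dvd_pow p hia
    have e1 : p ^ a % p ^ i = 0 := Nat.mod_eq_zero_of_dvd h1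
    have e2 : p ^ a * (b - 1) % p ^ i = 0 :=
      Nat.mod_eq_zero_of_dvd (h1.trans (dvd_mul_right _ _))
    rw [e1, e2]
    simpa using (pow_pos hppos i).not_ge
  · push_neg at hia
    have hlt : p ^ a < p ^ i := Nat.pow_lt_pow_right hp.one_lt hia
    rw [Nat.mod_eq_of_lt hlt]
    have hip : p ^ i = p ^ a * p ^ (i - a) := by
      rw [← pow_add]; congr 1; omega
    set q := p ^ (i - a) with hq
    have hq2 : 2 ≤ q := by
      calc 2 ≤ p := hp.two_le
      _ ≤ p ^ (i - a) := Nat.le_self_pow (by omega) p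
    have hmod : p ^ a * (b - 1) % p ^ i = p ^ a * ((b - 1) % q) := by
      rw [hip, Nat.mul_mod_mul_left]
    rw [hmod, hip]
    have hr : (b - 1) % q < q := Nat.mod_lt _ (by omega)
    have hrne : (b - 1) % q ≠ q - 1 := by
      intro h
      have hbq : b % q = 0 := by
        have hb1 : b = (b - 1) + 1 := by omega
        rw [hb1, Nat.add_mod, h, Nat.one_mod_eq_one.mpr (by omega),
          show q - 1 + 1 = q by omega, Nat.mod_self]
      exact hpb (dvd_trans (dvd_pow_self p (by omega : i - a ≠ 0))
        (Nat.dvd_of_mod_eq_zero hbq))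
    have h1q : 1 + (b - 1) % q < q := by omega
    have hfin : p ^ a + p ^ a * ((b - 1) % q) < p ^ a * q := by
      calc p ^ a + p ^ a * ((b - 1) % q) = p ^ a * (1 + (b - 1) % q) := by ring
      _ < p ^ a * q := Nat.mul_lt_mul_of_pos_left h1q (pow_pos hppos a)
    exact hfin.not_ge

theorem gcd_central_binomials_eq_one_iff_not_primePow (n : ℕ) (hn : 1 ≤ n) :
    (Finset.Icc 1 n).gcd (fun i => Nat.choose (n + 1) i) = 1 ↔ ¬ IsPrimePow (n + 1) := by
  constructor
  · intro hgcd hpp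
    obtain ⟨p, k, hp, hk, hpk⟩ := hpp
    rw [← Nat.prime_iff] at hp
    have hdvd : p ∣ (Finset.Icc 1 n).gcd (fun i => Nat.choose (n + 1) i) := by
      apply Finset.dvd_gcd
      intro i hi
      simp only [Finset.mem_Icc] at hi
      rw [← hpk]
      exact hp.dvd_choose_pow (by omega) (by omega)
    rw [hgcd, Nat.dvd_one] at hdvd
    exact hp.one_lt.ne' hdvd
  · intro hpp
    by_contra hg
    set g := (Finset.Icc 1 n).gcd (fun i => Nat.choose (n + 1) i) with hgdef
    have hg1 : g ∣ n + 1 := by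
      have := Finset.gcd_dvd (f := fun i => Nat.choose (n + 1) i)
        (Finset.mem_Icc.mpr ⟨le_refl 1, hn⟩)
      simpa using this
    have hgne : g ≠ 0 := fun h => by rw [h, zero_dvd_iff] at hg1; omega
    obtain ⟨p, hp, hpg⟩ := Nat.exists_prime_and_dvd hg
    have hpn : p ∣ n + 1 := hpg.trans hg1
    set a := (n + 1).factorization p with hadef
    have ha1 : 1 ≤ a := (Nat.Prime.factorization_pos_of_dvd hp (by omega) hpn)
    set b := (n + 1) / p ^ a with hbdef
    have hfac : p ^ a * b = n + 1 := Nat.ordProj_mul_ordCompl_eq_self (n + 1) p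
    have hpb : ¬ p ∣ b := Nat.not_dvd_ordCompl hp (by omega)
    have hb1 : 1 ≤ b := by
      rcases Nat.eq_zero_or_pos b with h | h
      · rw [h, mul_zero] at hfac; omega
      · omega
    have hb2 : 2 ≤ b := by
      rcases Nat.lt_or_ge b 2 with h | h
      · interval_cases b
        · exact absurd ⟨p, a, hp.prime, by omega, by omega⟩ hpp
      · exact h
    have hpa1 : 1 ≤ p ^ a := Nat.one_le_pow _ _ hp.pos
    have hpan : p ^ a ≤ n := by
      have h2 : p ^ a * 2 ≤ p ^ a * b := Nat.mul_le_mul_left _ hb2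
      rw [hfac] at h2
      omega
    have hmem : p ^ a ∈ Finset.Icc 1 n := Finset.mem_Icc.mpr ⟨hpa1, hpan⟩
    have hdc : p ∣ (n + 1).choose (p ^ a) := hpg.trans (Finset.gcd_dvd hmem)
    rw [← hfac] at hdc
    exact key_not_dvd_choose p a b hp ha1 hb2 hpb hdc
end

section
/- If n+1 = p^m for a prime p and integer m ≥ 1, then the greatest common divisor of C(n+1,1), ..., C(n+1,n) equals exactly p. -/
theorem gcd_choose_eq_prime_of_primePow_general (n m p : ℕ) (hp : p.Prime)
    (hm : 1 ≤ m) (h : n + 1 = p ^ m) :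
    (Finset.Icc 1 n).gcd (fun i => Nat.choose (n + 1) i) = p := by
  have hm₀ : m ≠ 0 := Nat.one_le_iff_ne_zero.mp hm
  have hpow : IsPrimePow (n + 1) := h ▸ hp.isPrimePow.pow hm₀
  have hgcd := Choose.gcd_choose_eq_minFac_of_isPrimePow hpow
  rw [Nat.add_sub_cancel] at hgcd
  rw [hgcd, h, hp.pow_minFac hm₀]

theorem gcd_choose_eq_prime_of_primePow (n m p : ℕ) (hn : 1 ≤ n) (hp : p.Prime)
    (hm : 1 ≤ m) (h : n + 1 = p ^ m) :
    (Finset.Icc 1 n).gcd (fun i => Nat.choose (n + 1) i) = p :=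
  gcd_choose_eq_prime_of_primePow_general n m p hp hm h
end

section
/- If n+1 is not a prime power, then for every prime p there exists an index i with 1 ≤ i ≤ n such that p does not divide the binomial coefficient C(n+1, i). -/
open Finset in
/-- Lucas' theorem gives `choose (p ^ k * m) (p ^ k) ≡ m [MOD p]`; taking `p ^ k` to be the exact
power of `p` dividing `N`, the cofactor `m` is prime to `p`, so `N = p ^ k`. -/
theorem Nat.isPrimePow_of_prime_dvd_choose {N p : ℕ} (hN : 2 ≤ N) (hp : p.Prime)
    (hdvd : ∀ i ∈ Icc 1 (N - 1), p ∣ N.choose i) : IsPrimePow N := by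
  have := Fact.mk hp
  have hN_eq : N = p ^ multiplicity p N :=
    Choose.eq_pow_multiplicity_of_choose_modEq_zero_nat (by omega)
      fun i hi => Nat.modEq_zero_iff_dvd.mpr (hdvd i hi)
  have hmult_pos : 0 < multiplicity p N := Nat.pos_of_ne_zero fun h0 => by
    rw [h0, pow_zero] at hN_eq
    omega
  exact ⟨p, multiplicity p N, hp.prime, hmult_pos, hN_eq.symm⟩

theorem exists_choose_not_dvd_of_not_primePow (n : ℕ) (hn : 1 ≤ n)
    (h : ¬ IsPrimePow (n + 1)) :
    ∀ p : ℕ, p.Prime → ∃ i, 1 ≤ i ∧ i ≤ n ∧ ¬ p ∣ Nat.choose (n + 1) i := by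
  intro p hp
  by_contra! hdvd
  refine h (Nat.isPrimePow_of_prime_dvd_choose (by omega) hp fun i hi => ?_)
  rw [Finset.mem_Icc] at hi
  exact hdvd i hi.1 (by omega)
end
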